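/- For a random walk on a connected weighted graph with volume V = ∑_{i,j} w_{ij}, the commute time between any two vertices u and v equals V times the effective resistance between u and v in the electrical network obtained by replacing each edge of weight w_e by a resistor of resistance 1/w_e: κ(u,v) = V · R_eff(u,v). -/

import Mathlib

/-!
The walk killed at `v` dies with positive probability within finitely many steps from every
vertex (follow a walk to `v` in the connected graph), so its survival probabilities decay
geometrically and the hitting times `h(·, v)` are finite. First-step analysis turns
`h = 1 + P h` off `v` into the Poisson equation `L h(·, v) = d - vol • δ_v` for the Laplacian
`L = D - W`. Hence `φ = (h(·, v) - h(·, u)) / vol` solves `L φ = δ_u - δ_v`: it is the potential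
of the unit electrical flow from `u` to `v`. Its current minimises energy among unit flows
(Thomson), with energy `φ u - φ v = (h(u, v) + h(v, u)) / vol`.
-/

open Matrix BigOperators

variable {V : Type*} [Fintype V] [DecidableEq V]

/-- Transition matrix `P = D⁻¹W` of the random walk on a weighted graph. -/
noncomputable def transition (w : Matrix V V ℝ) : Matrix V V ℝ :=
  Matrix.of fun a b => w a b / ∑ c, w a c

/-- The sub-stochastic matrix obtained by killing the walk at `v`. -/
noncomputable def killAt (P : Matrix V V ℝ) (v : V) : Matrix V V ℝ :=
  Matrix.of fun a b => if b = v then 0 else P a b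

/-- Expected hitting time `h(u,v) = ∑_{t ≥ 0} P(T_v > t)` of `v` starting from `u`. -/
noncomputable def hitTime (P : Matrix V V ℝ) (u v : V) : ℝ :=
  if u = v then 0 else ∑' t : ℕ, ((killAt P v ^ t) *ᵥ (fun _ => (1 : ℝ))) u

/-- Commute time `κ(u,v) = h(u,v) + h(v,u)` for the random walk on the weighted graph. -/
noncomputable def commuteTime (w : Matrix V V ℝ) (u v : V) : ℝ :=
  hitTime (transition w) u v + hitTime (transition w) v u

/-- The graph underlying a weight matrix: `a ~ b` iff `a ≠ b` and the weight is nonzero. -/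
def wGraph (w : Matrix V V ℝ) : SimpleGraph V where
  Adj a b := a ≠ b ∧ (w a b ≠ 0 ∨ w b a ≠ 0)
  symm := ⟨fun _ _ h => ⟨h.1.symm, h.2.symm⟩⟩
  loopless := ⟨fun _ h => h.1 rfl⟩

/-- A unit flow from `u` to `v` supported on the edges of the weighted graph. -/
def IsUnitFlow (w : Matrix V V ℝ) (u v : V) (f : Matrix V V ℝ) : Prop :=
  (∀ a b, f a b = -f b a) ∧ (∀ a b, w a b = 0 → f a b = 0) ∧
  (∀ a, a ≠ u → a ≠ v → ∑ b, f a b = 0) ∧ (∑ b, f u b = 1)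

/-- Dissipated energy of a flow: each edge of weight `w_e` is a resistor `1/w_e`. -/
noncomputable def energy (w f : Matrix V V ℝ) : ℝ :=
  (1 / 2) * ∑ a, ∑ b, if w a b = 0 then 0 else (f a b) ^ 2 / w a b

/-- Effective resistance between `u` and `v` (Thomson principle: minimal energy
of a unit flow from `u` to `v`). -/
noncomputable def effRes (w : Matrix V V ℝ) (u v : V) : ℝ :=
  sInf {E | ∃ f, IsUnitFlow w u v f ∧ E = energy w f}

lemma summable_of_antitone_of_le_geometric {f : ℕ → ℝ} (hf : ∀ t, 0 ≤ f t) (hanti : Antitone f)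
    {N : ℕ} [NeZero N] {c : ℝ} (hc0 : 0 ≤ c) (hc1 : c < 1) (hfc : ∀ k, f (k * N) ≤ c ^ k) :
    Summable f := by
  rw [← (Nat.divModEquiv N).symm.summable_iff]
  have hg : Summable fun p : ℕ × Fin N => c ^ p.1 * 1 :=
    (summable_geometric_of_lt_one hc0 hc1).mul_of_nonneg (Summable.of_finite (f := fun _ => 1))
      (fun _ => by positivity) (fun _ => zero_le_one)
  refine Summable.of_nonneg_of_le (fun _ => hf _) (fun p => ?_) hg
  simpa using (hanti (Nat.le_add_right _ _)).trans (hfc p.1)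

section Substochastic

variable {ι : Type*} [Fintype ι] {Q : Matrix ι ι ℝ}

lemma mulVec_mono_of_nonneg (hQ : ∀ a b, 0 ≤ Q a b) : Monotone (Q *ᵥ ·) :=
  fun _ _ hxy a => Finset.sum_le_sum fun b _ => mul_le_mul_of_nonneg_left (hxy b) (hQ a b)

lemma mulVec_apply_lt_of_nonneg (hQ : ∀ a b, 0 ≤ Q a b) {x y : ι → ℝ} (hxy : x ≤ y) {a b : ι}
    (hab : 0 < Q a b) (hb : x b < y b) : (Q *ᵥ x) a < (Q *ᵥ y) a :=
  Finset.sum_lt_sum (fun c _ => mul_le_mul_of_nonneg_left (hxy c) (hQ a c))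
    ⟨b, Finset.mem_univ b, mul_lt_mul_of_pos_left hb hab⟩

variable [DecidableEq ι]

lemma pow_mulVec_mono_of_nonneg (hQ : ∀ a b, 0 ≤ Q a b) (t : ℕ) : Monotone (Q ^ t *ᵥ ·) := by
  induction t with
  | zero => exact fun _ _ h => by simpa using h
  | succ t ih =>
    intro x y hxy
    simpa only [pow_succ', ← Matrix.mulVec_mulVec] using mulVec_mono_of_nonneg hQ (ih hxy)

lemma pow_mulVec_one_nonneg (hQ : ∀ a b, 0 ≤ Q a b) (t : ℕ) : 0 ≤ Q ^ t *ᵥ 1 := by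
  simpa using pow_mulVec_mono_of_nonneg hQ t (zero_le_one : (0 : ι → ℝ) ≤ 1)

lemma antitone_pow_mulVec_one (hQ : ∀ a b, 0 ≤ Q a b) (hQ1 : Q *ᵥ 1 ≤ 1) :
    Antitone fun t => Q ^ t *ᵥ 1 := by
  refine antitone_nat_of_succ_le fun t => ?_
  simpa only [pow_succ, ← Matrix.mulVec_mulVec] using pow_mulVec_mono_of_nonneg hQ t hQ1

lemma pow_mul_mulVec_one_le (hQ : ∀ a b, 0 ≤ Q a b) {N : ℕ} {c : ℝ} (hc0 : 0 ≤ c)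
    (hN : Q ^ N *ᵥ 1 ≤ c • 1) (k : ℕ) :
    Q ^ (k * N) *ᵥ 1 ≤ c ^ k • 1 := by
  induction k with
  | zero => simp
  | succ k ih =>
    calc Q ^ ((k + 1) * N) *ᵥ 1 = Q ^ (k * N) *ᵥ (Q ^ N *ᵥ 1) := by
          rw [Matrix.mulVec_mulVec, ← pow_add, add_mul, one_mul]
      _ ≤ Q ^ (k * N) *ᵥ (c • 1) := pow_mulVec_mono_of_nonneg hQ _ hN
      _ = c • (Q ^ (k * N) *ᵥ 1) := Matrix.mulVec_smul _ _ _
      _ ≤ c • (c ^ k • 1) := smul_le_smul_of_nonneg_left ih hc0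
      _ = c ^ (k + 1) • 1 := by rw [smul_smul, pow_succ']

lemma summable_pow_mulVec_one (hQ : ∀ a b, 0 ≤ Q a b) (hQ1 : Q *ᵥ 1 ≤ 1)
    (hdie : ∀ a, ∃ n, (Q ^ n *ᵥ 1) a < 1) (a : ι) :
    Summable fun t => (Q ^ t *ᵥ 1) a := by
  choose n hn using hdie
  have : Nonempty ι := ⟨a⟩
  set N := Finset.univ.sup n + 1
  obtain ⟨b, hb⟩ := Finite.exists_max fun b => (Q ^ N *ᵥ 1) b
  have hlt : ∀ a, (Q ^ N *ᵥ 1) a < 1 := fun a =>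
    (antitone_pow_mulVec_one hQ hQ1
      ((Finset.le_sup (Finset.mem_univ a)).trans (Nat.le_succ _)) a).trans_lt (hn a)
  refine summable_of_antitone_of_le_geometric (N := N) (c := (Q ^ N *ᵥ 1) b)
    (fun t => pow_mulVec_one_nonneg hQ t a) (fun s t hst => antitone_pow_mulVec_one hQ hQ1 hst a)
    (pow_mulVec_one_nonneg hQ N b) (hlt b) fun k => ?_
  simpa using pow_mul_mulVec_one_le hQ (pow_mulVec_one_nonneg hQ N b)
    (fun a => by simpa using hb a) k a

end Substochastic

lemma SimpleGraph.Connected.exists_walk_length_ne_zero {α : Type*} {G : SimpleGraph α}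
    (hconn : G.Connected) [Nontrivial α] (a v : α) : ∃ p : G.Walk a v, p.length ≠ 0 := by
  by_cases hav : a = v
  · subst hav
    obtain ⟨b, hb⟩ := exists_ne a
    obtain ⟨p⟩ := hconn a b
    refine ⟨p.append p.reverse, ?_⟩
    rw [SimpleGraph.Walk.length_append, SimpleGraph.Walk.length_reverse]
    have : p.length ≠ 0 := fun h => hb (p.eq_of_length_eq_zero h).symm
    omega
  · obtain ⟨p⟩ := hconn a v
    exact ⟨p, fun h => hav (p.eq_of_length_eq_zero h)⟩

section KilledWalk

variable {ι : Type*} [DecidableEq ι] {P : Matrix ι ι ℝ}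

lemma update_zero_le_one (v : ι) {x : ι → ℝ} (hx : x ≤ 1) : Function.update x v 0 ≤ 1 := by
  intro b
  by_cases hb : b = v
  · simp [hb]
  · simpa [hb] using hx b

lemma killAt_nonneg (hP : ∀ a b, 0 ≤ P a b) (v a b : ι) : 0 ≤ killAt P v a b := by
  by_cases hb : b = v <;> simp [killAt, hb, hP a b]

variable [Fintype ι]

lemma killAt_mulVec (P : Matrix ι ι ℝ) (v : ι) (x : ι → ℝ) :
    killAt P v *ᵥ x = P *ᵥ Function.update x v 0 := by
  ext a
  refine Finset.sum_congr rfl fun b _ => ?_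
  by_cases hb : b = v <;> simp [killAt, hb]

lemma hitTime_self (P : Matrix ι ι ℝ) (v : ι) : hitTime P v v = 0 := if_pos rfl

variable (hP : ∀ a b, 0 ≤ P a b) (hP1 : P *ᵥ 1 ≤ 1)
include hP hP1

lemma killAt_mulVec_one_le (v : ι) : killAt P v *ᵥ 1 ≤ 1 := by
  rw [killAt_mulVec]
  exact (mulVec_mono_of_nonneg hP (update_zero_le_one v le_rfl)).trans hP1

variable {G : SimpleGraph ι} (hG : ∀ a b, G.Adj a b → 0 < P a b)
include hG

lemma killAt_pow_length_mulVec_one_lt :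
    ∀ {a v : ι} (p : G.Walk a v), p.length ≠ 0 → (killAt P v ^ p.length *ᵥ 1) a < 1
  | _, _, .nil, hp => absurd rfl hp
  | a, v, .cons (v := b) hab q, _ => by
    set x := killAt P v ^ q.length *ᵥ 1
    have hx : x ≤ 1 := by
      simpa using antitone_pow_mulVec_one (killAt_nonneg hP v) (killAt_mulVec_one_le hP hP1 v)
        (Nat.zero_le q.length)
    have hxb : Function.update x v 0 b < 1 := by
      by_cases hbv : b = v
      · simp [hbv]
      · rw [Function.update_of_ne hbv]
        exact killAt_pow_length_mulVec_one_lt q fun h => hbv (q.eq_of_length_eq_zero h)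
    rw [SimpleGraph.Walk.length_cons, pow_succ', ← Matrix.mulVec_mulVec, killAt_mulVec]
    calc (P *ᵥ Function.update x v 0) a < (P *ᵥ 1) a :=
          mulVec_apply_lt_of_nonneg hP (update_zero_le_one v hx) (hG a b hab) hxb
      _ ≤ 1 := hP1 a

variable (hconn : G.Connected)
include hconn

lemma summable_killAt_pow_mulVec_one [Nontrivial ι] (v a : ι) :
    Summable fun t => (killAt P v ^ t *ᵥ 1) a := by
  refine summable_pow_mulVec_one (killAt_nonneg hP v) (killAt_mulVec_one_le hP hP1 v)
    (fun b => ?_) a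
  obtain ⟨p, hp⟩ := hconn.exists_walk_length_ne_zero b v
  exact ⟨p.length, killAt_pow_length_mulVec_one_lt hP hP1 hG p hp⟩

lemma hitTime_eq_one_add_mulVec {a v : ι} (hav : a ≠ v) :
    hitTime P a v = 1 + (P *ᵥ fun b => hitTime P b v) a := by
  have : Nontrivial ι := ⟨⟨a, v, hav⟩⟩
  have hs := summable_killAt_pow_mulVec_one hP hP1 hG hconn v
  set K := killAt P v
  have hhit : (fun b => hitTime P b v) = Function.update (fun b => ∑' t, (K ^ t *ᵥ 1) b) v 0 := by
    ext b
    by_cases hbv : b = v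
    · simp [hbv, hitTime_self]
    · simp only [Function.update_of_ne hbv, hitTime, if_neg hbv]; rfl
  have hhit_a : hitTime P a v = ∑' t, (K ^ t *ᵥ 1) a := by
    simpa [hav] using congrFun hhit a
  rw [hhit_a, hhit, ← killAt_mulVec, (hs a).tsum_eq_zero_add]
  simp only [pow_zero, Matrix.one_mulVec, Pi.one_apply, pow_succ', ← Matrix.mulVec_mulVec]
  congr 1
  change ∑' t, ∑ b, K a b * (K ^ t *ᵥ 1) b = ∑ b, K a b * ∑' t, (K ^ t *ᵥ 1) b
  rw [Summable.tsum_finsetSum fun b _ => (hs b).mul_left _]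
  simp only [tsum_mul_left]

end KilledWalk

section Flows

variable {ι : Type*} [Fintype ι] {w f : Matrix ι ι ℝ} {u v : ι}

lemma sum_sum_eq_zero_of_antisymm (hf : ∀ a b, f a b = -f b a) : ∑ a, ∑ b, f a b = 0 := by
  have h : ∑ a, ∑ b, f a b = -∑ a, ∑ b, f a b :=
    calc ∑ a, ∑ b, f a b = ∑ b, ∑ a, f a b := Finset.sum_comm
      _ = ∑ b, ∑ a, -f b a :=
        Finset.sum_congr rfl fun b _ => Finset.sum_congr rfl fun a _ => hf a b
      _ = -∑ a, ∑ b, f a b := by simp only [Finset.sum_neg_distrib]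
  linarith

lemma sum_sum_sub_mul_of_antisymm (hf : ∀ a b, f a b = -f b a) (φ : ι → ℝ) :
    ∑ a, ∑ b, (φ a - φ b) * f a b = 2 * ∑ a, φ a * ∑ b, f a b := by
  have h0 : ∑ a, ∑ b, (φ a + φ b) * f a b = 0 :=
    sum_sum_eq_zero_of_antisymm (f := Matrix.of fun a b => (φ a + φ b) * f a b) fun a b => by
      simp only [Matrix.of_apply, hf a b]; ring
  calc ∑ a, ∑ b, (φ a - φ b) * f a b
      = ∑ a, ∑ b, (2 * (φ a * f a b) - (φ a + φ b) * f a b) := by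
        simp only [sub_mul, add_mul]; congr! 2; ring
    _ = 2 * ∑ a, φ a * ∑ b, f a b - ∑ a, ∑ b, (φ a + φ b) * f a b := by
        simp only [Finset.sum_sub_distrib, Finset.mul_sum]
    _ = 2 * ∑ a, φ a * ∑ b, f a b := by rw [h0, sub_zero]

lemma not_isUnitFlow_self (u : ι) : ¬IsUnitFlow w u u f := by
  rintro ⟨hanti, -, hcons, hsource⟩
  have h0 := sum_sum_eq_zero_of_antisymm hanti
  rw [Fintype.sum_eq_single u fun a ha => hcons a ha ha, hsource] at h0
  exact one_ne_zero h0

lemma effRes_self (w : Matrix ι ι ℝ) (u : ι) : effRes w u u = 0 := by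
  simp [effRes, not_isUnitFlow_self]

lemma IsUnitFlow.sum_sink (hf : IsUnitFlow w u v f) (huv : u ≠ v) : ∑ b, f v b = -1 := by
  have h0 := sum_sum_eq_zero_of_antisymm hf.1
  rw [Fintype.sum_eq_add u v huv fun a ha => hf.2.2.1 a ha.1 ha.2, hf.2.2.2] at h0
  linarith

lemma IsUnitFlow.sum_mul_sum (hf : IsUnitFlow w u v f) (huv : u ≠ v) (φ : ι → ℝ) :
    ∑ a, φ a * ∑ b, f a b = φ u - φ v := by
  rw [Fintype.sum_eq_add u v huv fun a ha => by rw [hf.2.2.1 a ha.1 ha.2, mul_zero],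
    hf.2.2.2, hf.sum_sink huv]
  ring

lemma IsUnitFlow.sum_sum_sub_mul (hf : IsUnitFlow w u v f) (huv : u ≠ v) (φ : ι → ℝ) :
    ∑ a, ∑ b, (φ a - φ b) * f a b = 2 * (φ u - φ v) := by
  rw [sum_sum_sub_mul_of_antisymm hf.1, hf.sum_mul_sum huv]

lemma energy_eq_sum_sum_sq_div (w f : Matrix ι ι ℝ) :
    energy w f = (1 / 2) * ∑ a, ∑ b, f a b ^ 2 / w a b := by
  simp only [energy]
  congr! 3 with a _ b _
  split_ifs with h <;> simp [h]

lemma two_mul_mul_sub_le_sq_div {w d f : ℝ} (hw : 0 ≤ w) (hf : w = 0 → f = 0) :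
    2 * d * f - d * (w * d) ≤ f ^ 2 / w := by
  rcases hw.eq_or_lt with rfl | hw
  · simp [hf rfl]
  · rw [le_div_iff₀ hw]
    nlinarith [sq_nonneg (f - w * d)]

end Flows

section Potentials

variable {ι : Type*} [Fintype ι] [DecidableEq ι] {w : Matrix ι ι ℝ} {u v : ι} {φ : ι → ℝ}

noncomputable def laplacian (w : Matrix ι ι ℝ) : Matrix ι ι ℝ :=
  Matrix.diagonal (fun a => ∑ b, w a b) - w

lemma laplacian_mulVec_apply (w : Matrix ι ι ℝ) (g : ι → ℝ) (a : ι) :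
    (laplacian w *ᵥ g) a = ∑ b, w a b * (g a - g b) := by
  simp only [laplacian, Matrix.sub_mulVec, Pi.sub_apply, Matrix.mulVec_diagonal, Finset.sum_mul,
    mul_sub, Finset.sum_sub_distrib]
  rfl

lemma sum_laplacian_mulVec (hsym : ∀ a b, w a b = w b a) (g : ι → ℝ) :
    ∑ a, (laplacian w *ᵥ g) a = 0 := by
  simp only [laplacian_mulVec_apply]
  exact sum_sum_eq_zero_of_antisymm (f := Matrix.of fun a b => w a b * (g a - g b)) fun a b => by
    simp only [Matrix.of_apply, hsym a b]; ring

def current (w : Matrix ι ι ℝ) (φ : ι → ℝ) : Matrix ι ι ℝ :=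
  Matrix.of fun a b => w a b * (φ a - φ b)

variable (hsym : ∀ a b, w a b = w b a) (huv : u ≠ v)
  (hφ : laplacian w *ᵥ φ = Pi.single u 1 - Pi.single v 1)
include hsym huv hφ

lemma isUnitFlow_current : IsUnitFlow w u v (current w φ) := by
  have hdiv a : ∑ b, current w φ a b = (Pi.single u 1 - Pi.single v 1 : ι → ℝ) a := by
    rw [← hφ, laplacian_mulVec_apply]; rfl
  refine ⟨fun a b => ?_, fun a b hab => ?_, fun a hau hav => ?_, ?_⟩
  · simp only [current, Matrix.of_apply, hsym a b]; ring
  · simp [current, hab]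
  · simp [hdiv, hau, hav]
  · simp [hdiv, huv]

lemma energy_current : energy w (current w φ) = φ u - φ v := by
  have hsq a b : current w φ a b ^ 2 / w a b = (φ a - φ b) * current w φ a b := by
    rcases eq_or_ne (w a b) 0 with h | h
    · simp [current, h]
    · simp only [current, Matrix.of_apply]; field_simp
  rw [energy_eq_sum_sum_sq_div]
  simp only [hsq, (isUnitFlow_current hsym huv hφ).sum_sum_sub_mul huv]
  ring

/-- Thomson's principle. Termwise, `f² / w ≥ 2 Δφ f - w Δφ²` since `(f - w Δφ)² / w ≥ 0`. -/
lemma sub_le_energy (hnn : ∀ a b, 0 ≤ w a b) {f : Matrix ι ι ℝ} (hf : IsUnitFlow w u v f) :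
    φ u - φ v ≤ energy w f := by
  have hcur := (isUnitFlow_current hsym huv hφ).sum_sum_sub_mul huv φ
  have hpt a b : 2 * (φ a - φ b) * f a b - (φ a - φ b) * current w φ a b ≤ f a b ^ 2 / w a b :=
    two_mul_mul_sub_le_sq_div (hnn a b) (hf.2.1 a b)
  have hsum := Finset.sum_le_sum fun a (_ : a ∈ Finset.univ) =>
    Finset.sum_le_sum fun b (_ : b ∈ Finset.univ) => hpt a b
  simp only [Finset.sum_sub_distrib, mul_assoc, ← Finset.mul_sum] at hsum
  rw [energy_eq_sum_sum_sq_div]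
  linarith [hf.sum_sum_sub_mul huv φ]

lemma effRes_eq_sub (hnn : ∀ a b, 0 ≤ w a b) : effRes w u v = φ u - φ v :=
  IsLeast.csInf_eq
    ⟨⟨current w φ, isUnitFlow_current hsym huv hφ, (energy_current hsym huv hφ).symm⟩,
      by rintro _ ⟨f, hf, rfl⟩; exact sub_le_energy hsym huv hφ hnn hf⟩

end Potentials

section WeightedWalk

variable {ι : Type*} [Fintype ι] {w : Matrix ι ι ℝ}

lemma transition_nonneg (hnn : ∀ a b, 0 ≤ w a b) (a b : ι) : 0 ≤ transition w a b :=
  div_nonneg (hnn a b) (Finset.sum_nonneg fun c _ => hnn a c)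

lemma transition_mulVec_one (hdeg : ∀ a, 0 < ∑ b, w a b) : transition w *ᵥ 1 = 1 := by
  ext a
  simp [transition, Matrix.mulVec, dotProduct, ← Finset.sum_div, (hdeg a).ne']

lemma transition_pos_of_adj (hsym : ∀ a b, w a b = w b a) (hnn : ∀ a b, 0 ≤ w a b)
    (hdeg : ∀ a, 0 < ∑ b, w a b) {a b : ι} (hab : (wGraph w).Adj a b) : 0 < transition w a b := by
  refine div_pos ((hnn a b).lt_of_ne ?_) (hdeg a)
  rcases hab.2 with h | h
  · exact h.symm
  · rw [hsym]; exact h.symm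

variable [DecidableEq ι]

lemma laplacian_mulVec_apply_eq_degree_mul (hdeg : ∀ a, 0 < ∑ b, w a b) (g : ι → ℝ) (a : ι) :
    (laplacian w *ᵥ g) a = (∑ b, w a b) * (g a - (transition w *ᵥ g) a) := by
  have hPg : (∑ b, w a b) * (transition w *ᵥ g) a = ∑ b, w a b * g b := by
    simp only [transition, Matrix.mulVec, dotProduct, Matrix.of_apply, Finset.mul_sum]
    refine Finset.sum_congr rfl fun b _ => ?_
    field_simp [(hdeg a).ne']
  rw [laplacian_mulVec_apply, mul_sub, hPg, Finset.sum_mul, ← Finset.sum_sub_distrib]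
  simp only [mul_sub]

lemma laplacian_mulVec_hitTime (hsym : ∀ a b, w a b = w b a) (hnn : ∀ a b, 0 ≤ w a b)
    (hdeg : ∀ a, 0 < ∑ b, w a b) (hconn : (wGraph w).Connected) (v : ι) :
    laplacian w *ᵥ (fun a => hitTime (transition w) a v)
      = (fun a => ∑ b, w a b) - (∑ a, ∑ b, w a b) • Pi.single v 1 := by
  set h := fun a => hitTime (transition w) a v
  have hoff : ∀ a ≠ v, (laplacian w *ᵥ h) a = ∑ b, w a b := fun a hav => by
    rw [laplacian_mulVec_apply_eq_degree_mul hdeg]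
    simp only [h]
    rw [hitTime_eq_one_add_mulVec (transition_nonneg hnn) (transition_mulVec_one hdeg).le
      (fun _ _ => transition_pos_of_adj hsym hnn hdeg) hconn hav]
    ring
  have hv : (laplacian w *ᵥ h) v = ∑ b, w v b - ∑ a, ∑ b, w a b := by
    have hsum := sum_laplacian_mulVec hsym h
    rw [← Finset.add_sum_erase _ _ (Finset.mem_univ v),
      Finset.sum_congr rfl fun a ha => hoff a (Finset.ne_of_mem_erase ha)] at hsum
    linarith [Finset.add_sum_erase Finset.univ (fun a => ∑ b, w a b) (Finset.mem_univ v)]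
  ext a
  rcases eq_or_ne a v with rfl | hav
  · simp [hv]
  · simp [hoff a hav, hav]

end WeightedWalk

/-- **Chandra–Raghavan–Ruzzo–Smolensky–Tiwari.**  For the random walk on a connected
weighted graph with volume `V = ∑_{i,j} w_{ij}`, the commute time between any two
vertices equals `V` times the effective resistance: `κ(u,v) = V · R_eff(u,v)`. -/
theorem commute_time_eq_volume_mul_effRes (w : Matrix V V ℝ)
    (hsym : ∀ a b, w a b = w b a) (hnn : ∀ a b, 0 ≤ w a b)
    (hdeg : ∀ a, 0 < ∑ b, w a b) (hconn : (wGraph w).Connected)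
    (u v : V) :
    commuteTime w u v = (∑ a, ∑ b, w a b) * effRes w u v := by
  rcases eq_or_ne u v with rfl | huv
  · simp [commuteTime, hitTime_self, effRes_self]
  set vol := ∑ a, ∑ b, w a b
  have hvol : vol ≠ 0 := (Finset.sum_pos (fun a _ => hdeg a) ⟨u, Finset.mem_univ u⟩).ne'
  set h : V → V → ℝ := fun x a => hitTime (transition w) a x
  have hφ : laplacian w *ᵥ (vol⁻¹ • (h v - h u)) = Pi.single u 1 - Pi.single v 1 := by
    rw [Matrix.mulVec_smul, Matrix.mulVec_sub, laplacian_mulVec_hitTime hsym hnn hdeg hconn,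
      laplacian_mulVec_hitTime hsym hnn hdeg hconn, sub_sub_sub_cancel_left, ← smul_sub,
      smul_smul, inv_mul_cancel₀ hvol, one_smul]
  rw [effRes_eq_sub hsym huv hφ hnn]
  simp [h, commuteTime, hitTime_self]
  field_simp
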